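/- Let a₁ > a₂ > 0 and b₁, b₂ > 0 be real constants. Then there exists Δ₀ ∈ (0,1] such that for every Δ ∈ (0,Δ₀) the equation λ^Δ · ( (b₁ + b₂)Δ² + (a₂ − a₁)Δ + 1 ) = 1 has a unique solution λ in the interval (1, ∞). -/
import Mathlib


/-- **Existence and uniqueness of the root `λ*_Δ` for the EM mean-square stability analysis.**
For constants `a₁ > a₂ > 0` and `b₁, b₂ > 0`, there is a threshold `Δ₀ ∈ (0,1]` such that for
every stepsize `Δ ∈ (0, Δ₀)` the equation `λ^Δ·((b₁+b₂)Δ² + (a₂-a₁)Δ + 1) = 1` has a unique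
solution `λ ∈ (1, ∞)` (here `λ^Δ` is the real power `Real.rpow`). -/
theorem em_root_exists_unique (a₁ a₂ b₁ b₂ : ℝ)
    (ha : a₂ < a₁) (ha₂ : 0 < a₂) (hb₁ : 0 < b₁) (hb₂ : 0 < b₂) :
    ∃ Δ₀ ∈ Set.Ioc (0 : ℝ) 1, ∀ Δ ∈ Set.Ioo (0 : ℝ) Δ₀,
      ∃! lam : ℝ, lam ∈ Set.Ioi (1 : ℝ) ∧
        lam ^ Δ * ((b₁ + b₂) * Δ ^ 2 + (a₂ - a₁) * Δ + 1) = 1 := by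
  have hab : 0 < a₁ - a₂ := by linarith
  have hbb : 0 < b₁ + b₂ := by linarith
  refine ⟨min 1 (min ((a₁ - a₂) / (b₁ + b₂)) ((a₁ - a₂)⁻¹)), ⟨?_, min_le_left _ _⟩, ?_⟩
  · exact lt_min one_pos (lt_min (div_pos hab hbb) (inv_pos.mpr hab))
  intro Δ hΔ
  obtain ⟨hΔ0, hΔlt⟩ := hΔ
  have hΔ1 : Δ < (a₁ - a₂) / (b₁ + b₂) :=
    lt_of_lt_of_le hΔlt ((min_le_right _ _).trans (min_le_left _ _))
  have hΔ2 : Δ < (a₁ - a₂)⁻¹ :=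
    lt_of_lt_of_le hΔlt ((min_le_right _ _).trans (min_le_right _ _))
  set c : ℝ := (b₁ + b₂) * Δ ^ 2 + (a₂ - a₁) * Δ + 1 with hc
  have hc1 : c < 1 := by
    have h := (lt_div_iff₀ hbb).mp hΔ1
    nlinarith
  have hc0 : 0 < c := by
    have h : (a₁ - a₂) * Δ < 1 := by
      have := mul_lt_mul_of_pos_left hΔ2 hab
      rwa [mul_inv_cancel₀ hab.ne'] at this
    nlinarith [mul_nonneg hbb.le (sq_nonneg Δ)]
  have hΔne : Δ ≠ 0 := ne_of_gt hΔ0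
  refine ⟨c ^ (-Δ⁻¹), ⟨?_, ?_⟩, ?_⟩
  · have : (1:ℝ) < c ^ (-Δ⁻¹) := by
      rw [Real.rpow_neg hc0.le, one_lt_inv_iff₀]
      refine ⟨Real.rpow_pos_of_pos hc0 _, ?_⟩
      calc c ^ Δ⁻¹ < 1 ^ Δ⁻¹ := Real.rpow_lt_rpow hc0.le hc1 (inv_pos.mpr hΔ0)
      _ = 1 := Real.one_rpow _
    exact this
  · rw [← Real.rpow_mul hc0.le, neg_mul, inv_mul_cancel₀ hΔne, Real.rpow_neg_one,
      inv_mul_cancel₀ hc0.ne']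
  · rintro y ⟨hy1, hy2⟩
    have hy0 : (0:ℝ) < y := lt_trans one_pos hy1
    have hyΔ : y ^ Δ = c⁻¹ := eq_inv_of_mul_eq_one_left hy2
    calc y = (y ^ Δ) ^ Δ⁻¹ := (Real.rpow_rpow_inv hy0.le hΔne).symm
    _ = c ^ (-Δ⁻¹) := by rw [hyΔ, Real.inv_rpow hc0.le, ← Real.rpow_neg hc0.le]
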